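/- For each γ > 0 the matrices Σ̂_{0γ} and M̂₀^⊤Σ̂_{0γ}⁻¹M̂₀ are invertible, and the feasible predictor ŷ'_γ = M̂' θ̂_{0γ} + Δ̂^⊤ Σ̂_{0γ}⁻¹ (y₀ − M̂₀ θ̂_{0γ}), where θ̂_{0γ} = (M̂₀^⊤Σ̂_{0γ}⁻¹M̂₀)⁻¹M̂₀^⊤Σ̂_{0γ}⁻¹y₀, converges as γ → 0⁺ to X'(X₀^⊤X₀)⁻¹X₀^⊤y₀ for every fixed y₀ ∈ ℝ^{p−q}. -/

import Mathlib

/-!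
Write `Q = 1 - A (AᵀA)⁻¹ Aᵀ` and `V = A (AᵀA)⁻¹`, so that `M̂₀ = X₀ V`, `M̂' = X' V`,
`Δ̂ᵀ = X' Q X₀ᵀ` and `Σ̂_{0γ} = X₀ Q X₀ᵀ + γ`. For `γ > 0` the feasible predictor is exactly the
generalized ridge predictor `X' (X₀ᵀX₀ + γ Q)⁻¹ X₀ᵀ y₀`: after multiplication by `X₀ᵀX₀ + γ Q`
this is an identity that only uses `Q V = 0`, `Q² = Q` and `1 - Q = A Vᵀ`. Since `X₀ᵀX₀` is
invertible, matrix inversion is continuous there, and the ridge predictor at `γ = 0` is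
`X' (X₀ᵀX₀)⁻¹ X₀ᵀ y₀`.
-/

open Matrix Filter Topology

section Injective

variable {l m n R : Type*} [Fintype m] [Fintype n] [CommRing R]

theorem Matrix.mulVec_injective_mul {A : Matrix l m R} {B : Matrix m n R}
    (hA : Function.Injective A.mulVec) (hB : Function.Injective B.mulVec) :
    Function.Injective (A * B).mulVec := by
  simpa only [Function.comp_def, mulVec_mulVec] using hA.comp hB

variable [DecidableEq n]

theorem Matrix.mulVec_injective_of_isUnit_mul {A : Matrix n m R} {B : Matrix m n R}
    (h : IsUnit (A * B)) : Function.Injective B.mulVec := by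
  refine Function.Injective.of_comp (f := A.mulVec) ?_
  simpa only [Function.comp_def, mulVec_mulVec] using mulVec_injective_of_isUnit h

theorem Matrix.posDef_transpose_mul_self_of_isUnit {X : Matrix m n ℝ} (h : IsUnit (Xᵀ * X)) :
    (Xᵀ * X).PosDef := by
  simpa only [conjTranspose_eq_transpose_of_trivial] using
    PosDef.conjTranspose_mul_self X (mulVec_injective_of_isUnit_mul h)

end Injective

section ResidualProjection

variable {n k R : Type*} [Fintype n] [Fintype k] [DecidableEq k] [CommRing R]

theorem Matrix.transpose_inv_transpose_mul_self (A : Matrix n k R) :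
    (Aᵀ * A)⁻¹ᵀ = (Aᵀ * A)⁻¹ := by
  rw [transpose_nonsing_inv, transpose_mul, transpose_transpose]

variable [DecidableEq n]

theorem Matrix.transpose_one_sub_proj (A : Matrix n k R) :
    (1 - A * (Aᵀ * A)⁻¹ * Aᵀ)ᵀ = 1 - A * (Aᵀ * A)⁻¹ * Aᵀ := by
  simp only [transpose_sub, transpose_one, transpose_mul, transpose_transpose,
    transpose_inv_transpose_mul_self, Matrix.mul_assoc]

theorem Matrix.one_sub_proj_mul_self {A : Matrix n k R} (hA : IsUnit (Aᵀ * A)) :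
    (1 - A * (Aᵀ * A)⁻¹ * Aᵀ) * A = 0 := by
  rw [Matrix.sub_mul, Matrix.one_mul, Matrix.mul_assoc _ Aᵀ, Matrix.mul_assoc A,
    nonsing_inv_mul _ ((isUnit_iff_isUnit_det _).mp hA), Matrix.mul_one, sub_self]

theorem Matrix.one_sub_proj_mul_one_sub_proj {A : Matrix n k R} (hA : IsUnit (Aᵀ * A)) :
    (1 - A * (Aᵀ * A)⁻¹ * Aᵀ) * (1 - A * (Aᵀ * A)⁻¹ * Aᵀ) = 1 - A * (Aᵀ * A)⁻¹ * Aᵀ := by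
  conv_lhs => rw [Matrix.mul_sub, Matrix.mul_one, ← Matrix.mul_assoc, ← Matrix.mul_assoc,
    one_sub_proj_mul_self hA, Matrix.zero_mul, Matrix.zero_mul, sub_zero]

theorem Matrix.posSemidef_one_sub_proj {A : Matrix n k ℝ} (hA : IsUnit (Aᵀ * A)) :
    (1 - A * (Aᵀ * A)⁻¹ * Aᵀ).PosSemidef := by
  have h := posSemidef_conjTranspose_mul_self (1 - A * (Aᵀ * A)⁻¹ * Aᵀ)
  rwa [conjTranspose_eq_transpose_of_trivial, transpose_one_sub_proj,
    one_sub_proj_mul_one_sub_proj hA] at h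

end ResidualProjection

section FeasiblePredictor

variable {l m n k R : Type*} [Fintype m] [Fintype n] [Fintype k]
  [DecidableEq m] [DecidableEq n] [DecidableEq k] [CommRing R]

/-- `θ̂_{0γ} = glsCoef M̂₀ Σ̂_{0γ} *ᵥ y₀`. -/
noncomputable def glsCoef (M : Matrix m k R) (S : Matrix m m R) : Matrix k m R :=
  (Mᵀ * S⁻¹ * M)⁻¹ * (Mᵀ * S⁻¹)

theorem feasible_predictor_matrix_eq (X : Matrix m n R) {Q : Matrix n n R} {V W : Matrix n k R}
    {γ : R} (hQV : Q * V = 0) (hQQ : Q * Q = Q) (hP : 1 - Q = W * Vᵀ)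
    {S : Matrix m m R} (hS : S = X * Q * Xᵀ + γ • 1) (hSu : IsUnit S)
    (hN : IsUnit ((X * V)ᵀ * S⁻¹ * (X * V))) (hB : IsUnit (Xᵀ * X + γ • Q)) :
    V * glsCoef (X * V) S + Q * Xᵀ * S⁻¹ * (1 - X * V * glsCoef (X * V) S)
      = (Xᵀ * X + γ • Q)⁻¹ * Xᵀ := by
  set Z := Xᵀ * S⁻¹
  set N := Z * X
  set H := ((X * V)ᵀ * S⁻¹ * (X * V))⁻¹
  set B := Xᵀ * X + γ • Q
  have hT : glsCoef (X * V) S = H * (Vᵀ * Z) := by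
    simp only [glsCoef, H, Z, transpose_mul, Matrix.mul_assoc]
  have hVNVH : Vᵀ * N * V * H = 1 := by
    have : (X * V)ᵀ * S⁻¹ * (X * V) = Vᵀ * N * V := by
      simp only [N, Z, transpose_mul, Matrix.mul_assoc]
    rw [← this]
    exact mul_nonsing_inv _ ((isUnit_iff_isUnit_det _).mp hN)
  have hZ : Xᵀ * X * Q * Z + γ • Z = Xᵀ := by
    have hXS : Xᵀ * S = Xᵀ * X * Q * Xᵀ + γ • Xᵀ := by
      rw [hS, Matrix.mul_add, Matrix.mul_smul, Matrix.mul_one]; simp only [Matrix.mul_assoc]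
    calc Xᵀ * X * Q * Z + γ • Z = Xᵀ * S * S⁻¹ := by
          rw [hXS]; simp only [Z, Matrix.add_mul, Matrix.smul_mul, Matrix.mul_assoc]
      _ = Xᵀ := by
          rw [Matrix.mul_assoc, mul_nonsing_inv _ ((isUnit_iff_isUnit_det _).mp hSu),
            Matrix.mul_one]
  have hNX : Xᵀ * X * Q * N + γ • N = Xᵀ * X := by
    simpa only [N, Matrix.add_mul, Matrix.smul_mul, Matrix.mul_assoc] using congrArg (· * X) hZ
  have hBQ : B * Q = Xᵀ * X * Q + γ • 1 - γ • (W * Vᵀ) := by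
    rw [← hP, Matrix.add_mul, Matrix.smul_mul, hQQ, smul_sub]; abel
  have hBQZ : B * Q * Z = Xᵀ - γ • (W * Vᵀ * Z) := by
    rw [hBQ, Matrix.sub_mul, Matrix.add_mul, Matrix.smul_mul, Matrix.one_mul, hZ, Matrix.smul_mul]
  have hBQN : B * Q * N = Xᵀ * X - γ • (W * Vᵀ * N) := by
    rw [hBQ, Matrix.sub_mul, Matrix.add_mul, Matrix.smul_mul, Matrix.one_mul, hNX,
      Matrix.smul_mul]
  have hBV : B * V = Xᵀ * X * V := by
    rw [Matrix.add_mul, Matrix.smul_mul, Matrix.mul_assoc, hQV, smul_zero, add_zero]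
  rw [hT, Matrix.mul_assoc Q Xᵀ]
  set T := H * (Vᵀ * Z)
  suffices B * (V * T + Q * Z * (1 - X * V * T)) = Xᵀ from
    (nonsing_inv_mul_cancel_left _ _ ((isUnit_iff_isUnit_det _).mp hB)).symm.trans
      (congrArg _ this)
  calc B * (V * T + Q * Z * (1 - X * V * T)) = B * V * T + B * Q * Z - B * Q * N * V * T := by
        simp only [N, Matrix.mul_add, Matrix.mul_sub, Matrix.mul_one, Matrix.mul_assoc,
          add_sub_assoc]
    _ = Xᵀ - γ • (W * Vᵀ * Z) + γ • (W * (Vᵀ * N * V * H) * Vᵀ * Z) := by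
        rw [hBV, hBQZ, hBQN]
        simp only [T, Matrix.sub_mul, Matrix.smul_mul, Matrix.mul_assoc]
        abel
    _ = Xᵀ := by rw [hVNVH, Matrix.mul_one, sub_add_cancel]

theorem feasible_predictor_eq (X : Matrix m n R) (X' : Matrix l n R) {Q : Matrix n n R}
    {V W : Matrix n k R} {γ : R} (hQV : Q * V = 0) (hQQ : Q * Q = Q) (hP : 1 - Q = W * Vᵀ)
    {S : Matrix m m R} (hS : S = X * Q * Xᵀ + γ • 1) (hSu : IsUnit S)
    (hN : IsUnit ((X * V)ᵀ * S⁻¹ * (X * V))) (hB : IsUnit (Xᵀ * X + γ • Q)) (y : m → R) :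
    (X' * V) *ᵥ (glsCoef (X * V) S *ᵥ y)
        + (X' * Q * Xᵀ * S⁻¹) *ᵥ (y - (X * V) *ᵥ (glsCoef (X * V) S *ᵥ y))
      = (X' * (Xᵀ * X + γ • Q)⁻¹ * Xᵀ) *ᵥ y := by
  rw [Matrix.mul_assoc X' (Xᵀ * X + γ • Q)⁻¹,
    ← feasible_predictor_matrix_eq X hQV hQQ hP hS hSu hN hB]
  simp only [Matrix.mul_add, Matrix.mul_sub, Matrix.mul_one, add_mulVec, sub_mulVec, mulVec_sub,
    mulVec_mulVec, Matrix.mul_assoc]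

end FeasiblePredictor

theorem Matrix.continuousAt_inv_add_smul {n 𝕜 : Type*} [Fintype n] [DecidableEq n]
    [NormedField 𝕜] {C : Matrix n n 𝕜} (hC : IsUnit C) (Q : Matrix n n 𝕜) :
    ContinuousAt (fun t : 𝕜 => (C + t • Q)⁻¹) 0 := by
  have hinv : ContinuousAt Inv.inv (C + (0 : 𝕜) • Q) := by
    refine continuousAt_matrix_inv _ ?_
    rw [zero_smul, add_zero, Ring.inverse_eq_inv']
    exact continuousAt_inv₀ ((isUnit_iff_isUnit_det _).mp hC).ne_zero
  exact hinv.comp (f := fun t : 𝕜 => C + t • Q) (by fun_prop)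

theorem Matrix.tendsto_mul_inv_add_smul_mul_mulVec {l m n 𝕜 : Type*} [Fintype m] [Fintype n]
    [DecidableEq n] [NormedField 𝕜] (L : Matrix l n 𝕜) {C : Matrix n n 𝕜} (hC : IsUnit C)
    (Q : Matrix n n 𝕜) (Y : Matrix n m 𝕜) (y : m → 𝕜) :
    Tendsto (fun t : 𝕜 => (L * (C + t • Q)⁻¹ * Y) *ᵥ y) (𝓝 0) (𝓝 ((L * C⁻¹ * Y) *ᵥ y)) := by
  have h := (continuousAt_inv_add_smul hC Q).tendsto
  rw [zero_smul, add_zero] at h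
  exact ((by fun_prop : Continuous fun M : Matrix n n 𝕜 => (L * M * Y) *ᵥ y).tendsto _).comp h

theorem stmt_4_general (p n K q : ℕ)
    (X₀ : Matrix (Fin (p - q)) (Fin n) ℝ) (X' : Matrix (Fin q) (Fin n) ℝ)
    (A : Matrix (Fin n) (Fin K) ℝ)
    (hX₀ : IsUnit (X₀ᵀ * X₀)) (hA : IsUnit (Aᵀ * A))
    (M₀ : Matrix (Fin (p - q)) (Fin K) ℝ) (hM₀ : M₀ = X₀ * A * (Aᵀ * A)⁻¹)
    (M' : Matrix (Fin q) (Fin K) ℝ) (hM' : M' = X' * A * (Aᵀ * A)⁻¹)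
    (Sg : ℝ → Matrix (Fin (p - q)) (Fin (p - q)) ℝ)
    (hSg : ∀ γ : ℝ, Sg γ = X₀ * (1 - A * (Aᵀ * A)⁻¹ * Aᵀ) * X₀ᵀ
      + γ • (1 : Matrix (Fin (p - q)) (Fin (p - q)) ℝ))
    (Dt : Matrix (Fin q) (Fin (p - q)) ℝ)
    (hDt : Dt = X' * (1 - A * (Aᵀ * A)⁻¹ * Aᵀ) * X₀ᵀ)
    (y₀ : Fin (p - q) → ℝ) :
    (∀ γ : ℝ, 0 < γ → (Sg γ).PosDef ∧ IsUnit (M₀ᵀ * (Sg γ)⁻¹ * M₀)) ∧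
      Filter.Tendsto
        (fun γ : ℝ =>
          let θ₀ : Fin K → ℝ := ((M₀ᵀ * (Sg γ)⁻¹ * M₀)⁻¹ * (M₀ᵀ * (Sg γ)⁻¹)).mulVec y₀
          M'.mulVec θ₀ + (Dt * (Sg γ)⁻¹).mulVec (y₀ - M₀.mulVec θ₀))
        (nhdsWithin 0 (Set.Ioi 0))
        (nhds ((X' * (X₀ᵀ * X₀)⁻¹ * X₀ᵀ).mulVec y₀)) := by
  set Q := 1 - A * (Aᵀ * A)⁻¹ * Aᵀ
  set V := A * (Aᵀ * A)⁻¹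
  obtain rfl : M₀ = X₀ * V := hM₀.trans (Matrix.mul_assoc _ _ _)
  obtain rfl : M' = X' * V := hM'.trans (Matrix.mul_assoc _ _ _)
  subst hDt
  have hQV : Q * V = 0 := by rw [← Matrix.mul_assoc, one_sub_proj_mul_self hA, Matrix.zero_mul]
  have hP : 1 - Q = A * Vᵀ := by
    rw [sub_sub_cancel, transpose_mul, transpose_inv_transpose_mul_self, Matrix.mul_assoc]
  have hQ : Q.PosSemidef := posSemidef_one_sub_proj hA
  have hC : (X₀ᵀ * X₀).PosDef := posDef_transpose_mul_self_of_isUnit hX₀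
  have hS : ∀ γ : ℝ, 0 < γ → (Sg γ).PosDef := fun γ hγ => by
    rw [hSg, ← conjTranspose_eq_transpose_of_trivial]
    exact PosDef.posSemidef_add (hQ.mul_mul_conjTranspose_same X₀) (PosDef.one.smul hγ)
  have hAV : Aᵀ * V = 1 := by
    rw [← Matrix.mul_assoc, mul_nonsing_inv _ ((isUnit_iff_isUnit_det _).mp hA)]
  have hM₀ : Function.Injective (X₀ * V).mulVec := mulVec_injective_mul
    (mulVec_injective_of_isUnit_mul hX₀) (mulVec_injective_of_isUnit_mul (hAV ▸ isUnit_one))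
  have hN : ∀ γ : ℝ, 0 < γ → IsUnit ((X₀ * V)ᵀ * (Sg γ)⁻¹ * (X₀ * V)) := fun γ hγ => by
    simpa only [conjTranspose_eq_transpose_of_trivial] using
      ((hS γ hγ).inv.conjTranspose_mul_mul_same hM₀).isUnit
  refine ⟨fun γ hγ => ⟨hS γ hγ, hN γ hγ⟩, ?_⟩
  have hridge := tendsto_mul_inv_add_smul_mul_mulVec X' hC.isUnit Q X₀ᵀ y₀
  refine (hridge.mono_left nhdsWithin_le_nhds).congr' ?_
  filter_upwards [self_mem_nhdsWithin] with γ hγ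
  have hB : IsUnit (X₀ᵀ * X₀ + γ • Q) := (hC.add_posSemidef (hQ.smul hγ.le)).isUnit
  exact (feasible_predictor_eq X₀ X' hQV (one_sub_proj_mul_one_sub_proj hA) hP (hSg γ)
    (hS γ hγ).isUnit (hN γ hγ) hB y₀).symm

/-- For each γ > 0 the matrices `Σ̂_{0γ}` and `M̂₀ᵀ Σ̂_{0γ}⁻¹ M̂₀` are invertible,
and the feasible predictor `ŷ'_γ` tends, as γ → 0⁺, to the RTS predictor
`X'(X₀ᵀX₀)⁻¹X₀ᵀ y₀`. -/
theorem stmt_4 (p n K q : ℕ) (hK : 0 < K) (hq : 0 < q) (hKn : K ≤ n)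
    (hnpq : n < p - q)
    (X₀ : Matrix (Fin (p - q)) (Fin n) ℝ) (X' : Matrix (Fin q) (Fin n) ℝ)
    (A : Matrix (Fin n) (Fin K) ℝ)
    (hX₀ : IsUnit (X₀ᵀ * X₀)) (hA : IsUnit (Aᵀ * A))
    (M₀ : Matrix (Fin (p - q)) (Fin K) ℝ) (hM₀ : M₀ = X₀ * A * (Aᵀ * A)⁻¹)
    (M' : Matrix (Fin q) (Fin K) ℝ) (hM' : M' = X' * A * (Aᵀ * A)⁻¹)
    (Sg : ℝ → Matrix (Fin (p - q)) (Fin (p - q)) ℝ)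
    (hSg : ∀ γ : ℝ, Sg γ = X₀ * (1 - A * (Aᵀ * A)⁻¹ * Aᵀ) * X₀ᵀ
      + γ • (1 : Matrix (Fin (p - q)) (Fin (p - q)) ℝ))
    (Dt : Matrix (Fin q) (Fin (p - q)) ℝ)
    (hDt : Dt = X' * (1 - A * (Aᵀ * A)⁻¹ * Aᵀ) * X₀ᵀ)
    (y₀ : Fin (p - q) → ℝ) :
    (∀ γ : ℝ, 0 < γ → (Sg γ).PosDef ∧ IsUnit (M₀ᵀ * (Sg γ)⁻¹ * M₀)) ∧
      Filter.Tendsto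
        (fun γ : ℝ =>
          let θ₀ : Fin K → ℝ := ((M₀ᵀ * (Sg γ)⁻¹ * M₀)⁻¹ * (M₀ᵀ * (Sg γ)⁻¹)).mulVec y₀
          M'.mulVec θ₀ + (Dt * (Sg γ)⁻¹).mulVec (y₀ - M₀.mulVec θ₀))
        (nhdsWithin 0 (Set.Ioi 0))
        (nhds ((X' * (X₀ᵀ * X₀)⁻¹ * X₀ᵀ).mulVec y₀)) :=
  stmt_4_general p n K q X₀ X' A hX₀ hA M₀ hM₀ M' hM' Sg hSg Dt hDt y₀
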